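/- Combinatorial mutations preserve the number of boundary lattice points of dilates of the dual: with Q := mut_w(P,F), for every positive integer k one has |∂(kP*) ∩ M| = |∂(kQ*) ∩ M|. -/

import Mathlib

open Set Pointwise

noncomputable section

def pairing {n : ℕ} (w : Fin n → ℤ) (x : Fin n → ℚ) : ℚ :=
  ∑ i, (w i : ℚ) * x i

def IsLatticePt {n : ℕ} (x : Fin n → ℚ) : Prop := ∀ i, ∃ z : ℤ, x i = (z : ℚ)

def IsLatticePolytope {n : ℕ} (P : Set (Fin n → ℚ)) : Prop :=
  ∃ S : Finset (Fin n → ℚ), (∀ x ∈ S, IsLatticePt x) ∧ P = convexHull ℚ (S : Set (Fin n → ℚ))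

def IsPrimitive {n : ℕ} (w : Fin n → ℤ) : Prop := Finset.univ.gcd w = 1

def wSlice {n : ℕ} (w : Fin n → ℤ) (h : ℤ) (P : Set (Fin n → ℚ)) : Set (Fin n → ℚ) :=
  convexHull ℚ {x | x ∈ P ∧ IsLatticePt x ∧ pairing w x = (h : ℚ)}

def mutation {n : ℕ} (w : Fin n → ℤ) (P F : Set (Fin n → ℚ)) (G : ℤ → Set (Fin n → ℚ)) :
    Set (Fin n → ℚ) :=
  convexHull ℚ ((⋃ h : ℤ, ⋃ _ : h < 0, G h) ∪
    ⋃ h : ℤ, ⋃ _ : 0 ≤ h, (wSlice w h P + (h : ℚ) • F))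

def IsMutData {n : ℕ} (w : Fin n → ℤ) (P F : Set (Fin n → ℚ))
    (G : ℤ → Set (Fin n → ℚ)) : Prop :=
  IsLatticePolytope F ∧ F.Nonempty ∧ (∀ x ∈ F, pairing w x = 0) ∧
  ∀ h : ℤ, h < 0 →
    (G h = ∅ ∨ IsLatticePolytope (G h)) ∧
    {v | v ∈ P.extremePoints ℚ ∧ pairing w v = (h : ℚ)} ⊆ G h + (-(h : ℚ)) • F ∧
    G h + (-(h : ℚ)) • F ⊆ wSlice w h P

def dpair {n : ℕ} (u v : Fin n → ℚ) : ℚ := ∑ i, u i * v i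

def dualP {n : ℕ} (P : Set (Fin n → ℚ)) : Set (Fin n → ℚ) := {u | ∀ v ∈ P, -1 ≤ dpair u v}

/-!
Let `m(u) = min_{f ∈ F} ⟨u, f⟩`. As `F ⊆ w^⊥`, `m` is constant along `w`, so the shear
`T u = u - m(u) w` is a piecewise linear homeomorphism of `M_ℚ` with inverse `u ↦ u + m(u) w`.
It maps `M` onto `M` because `m` is integral on `M`, and it commutes with dilation by `k ≥ 0`.
Testing `T u` against the generators of `Q`, and `T⁻¹ u` against the vertices of `P` (which at
negative height lie in `G_h + (-h) F`), shows `T(P*) = Q*`. Hence `T(∂(kP*)) = ∂(kQ*)`, and `T`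
matches the lattice points of the two boundaries.
-/

section Minkowski
variable {𝕜 E : Type*} [Field 𝕜] [LinearOrder 𝕜] [IsStrictOrderedRing 𝕜] [AddCommGroup E]
  [Module 𝕜 E]

theorem mem_convexHull_sdiff_of_notMem_extremePoints {S : Set E} {x : E} (hxS : x ∈ S)
    (hx : x ∉ (convexHull 𝕜 S).extremePoints 𝕜) : x ∈ convexHull 𝕜 (S \ {x}) := by
  rcases (S \ {x}).eq_empty_or_nonempty with hS | hS
  · rw [sdiff_eq_empty, subset_singleton_iff_eq] at hS
    rcases hS with rfl | rfl
    · exact absurd hxS (notMem_empty x)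
    · simp at hx
  have hconv : convexHull 𝕜 S = convexJoin 𝕜 {x} (convexHull 𝕜 (S \ {x})) := by
    rw [← convexHull_insert hS, insert_sdiff_singleton, insert_eq_of_mem hxS]
  rw [mem_extremePoints_iff_forall_segment, hconv] at hx
  push Not at hx
  obtain ⟨x₁, hx₁, x₂, hx₂, ⟨α, β, hα, hβ, hαβ, hx⟩, hx₁x, hx₂x⟩ :=
    hx (hconv ▸ subset_convexHull 𝕜 S hxS)
  obtain ⟨y₁, hy₁, b₁, hb₁, a₁, t₁, -, ht₁, hat₁, rfl⟩ := mem_convexJoin.1 hx₁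
  obtain ⟨y₂, hy₂, b₂, hb₂, a₂, t₂, -, ht₂, hat₂, rfl⟩ := mem_convexJoin.1 hx₂
  rw [mem_singleton_iff] at hy₁ hy₂
  subst y₁ y₂
  obtain rfl : a₁ = 1 - t₁ := by linear_combination hat₁
  obtain rfl : a₂ = 1 - t₂ := by linear_combination hat₂
  have ht₁' : 0 < t₁ := ht₁.lt_of_ne <| by rintro rfl; simp at hx₁x
  have ht₂' : 0 < t₂ := ht₂.lt_of_ne <| by rintro rfl; simp at hx₂x
  have hs : 0 < α * t₁ + β * t₂ := by
    rcases le_total t₁ t₂ with h | h <;>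
      nlinarith [mul_le_mul_of_nonneg_left h hα, mul_le_mul_of_nonneg_left h hβ]
  -- `x` is a convex combination of `b₁` and `b₂`, with weights proportional to `α t₁` and `β t₂`
  convert (convex_convexHull 𝕜 (S \ {x})) hb₁ hb₂ (div_nonneg (mul_nonneg hα ht₁) hs.le)
    (div_nonneg (mul_nonneg hβ ht₂) hs.le) (by field_simp) using 1
  apply smul_right_injective E hs.ne'
  simp only [smul_add, smul_smul, mul_div_cancel₀ _ hs.ne']
  linear_combination (norm := module) -hx + hαβ • x

theorem Finset.convexHull_extremePoints_convexHull (S : Finset E) :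
    convexHull 𝕜 ((convexHull 𝕜 (S : Set E)).extremePoints 𝕜) = convexHull 𝕜 (S : Set E) := by
  classical
  refine (convexHull_min extremePoints_subset (convex_convexHull 𝕜 _)).antisymm ?_
  induction S using Finset.strongInduction with
  | H S ih =>
  by_cases hS : (S : Set E) ⊆ (convexHull 𝕜 (S : Set E)).extremePoints 𝕜
  · exact convexHull_mono hS
  obtain ⟨x, hxS, hx⟩ := Set.not_subset.1 hS
  have heq : convexHull 𝕜 (S.erase x : Set E) = convexHull 𝕜 (S : Set E) := by
    rw [Finset.coe_erase]
    refine (convexHull_mono Set.sdiff_subset).antisymm (convexHull_min (fun y hy => ?_)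
      (convex_convexHull 𝕜 _))
    rcases eq_or_ne y x with rfl | hyx
    · exact mem_convexHull_sdiff_of_notMem_extremePoints hxS hx
    · exact subset_convexHull 𝕜 _ ⟨hy, hyx⟩
  simpa only [heq] using ih (S.erase x) (Finset.erase_ssubset hxS)

end Minkowski

section Pairing
variable {n : ℕ}

theorem dpair_add_right (u x y : Fin n → ℚ) : dpair u (x + y) = dpair u x + dpair u y :=
  dotProduct_add u x y

theorem dpair_smul_right (u : Fin n → ℚ) (c : ℚ) (x : Fin n → ℚ) :
    dpair u (c • x) = c * dpair u x :=
  dotProduct_smul c u x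

theorem dpair_add_left (u v x : Fin n → ℚ) : dpair (u + v) x = dpair u x + dpair v x :=
  add_dotProduct u v x

theorem dpair_sub_left (u v x : Fin n → ℚ) : dpair (u - v) x = dpair u x - dpair v x :=
  sub_dotProduct u v x

theorem dpair_smul_left (c : ℚ) (u x : Fin n → ℚ) : dpair (c • u) x = c * dpair u x :=
  smul_dotProduct c u x

theorem dpair_intCast_left (w : Fin n → ℤ) (x : Fin n → ℚ) :
    dpair (fun i => (w i : ℚ)) x = pairing w x :=
  rfl

theorem pairing_add (w : Fin n → ℤ) (x y : Fin n → ℚ) :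
    pairing w (x + y) = pairing w x + pairing w y :=
  dpair_add_right _ x y

theorem pairing_smul (w : Fin n → ℤ) (c : ℚ) (x : Fin n → ℚ) :
    pairing w (c • x) = c * pairing w x :=
  dpair_smul_right _ c x

theorem isLinearMap_dpair (u : Fin n → ℚ) : IsLinearMap ℚ (dpair u) :=
  ⟨dpair_add_right u, fun c x => dpair_smul_right u c x⟩

theorem isLatticePt_iff_mem_range {x : Fin n → ℚ} :
    IsLatticePt x ↔ x ∈ range fun (u : Fin n → ℤ) i => (u i : ℚ) := by
  refine ⟨fun hx => ?_, ?_⟩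
  · choose u hu using hx
    exact ⟨u, funext fun i => (hu i).symm⟩
  · rintro ⟨u, rfl⟩ i
    exact ⟨u i, rfl⟩

theorem IsLatticePt.add_intCast_smul {x y : Fin n → ℚ} (hx : IsLatticePt x) (hy : IsLatticePt y)
    (z : ℤ) : IsLatticePt (x + (z : ℚ) • y) := fun i => by
  obtain ⟨a, ha⟩ := hx i
  obtain ⟨b, hb⟩ := hy i
  exact ⟨a + z * b, by simp [ha, hb]⟩

theorem IsLatticePt.dpair_eq_intCast {u v : Fin n → ℚ} (hu : IsLatticePt u) (hv : IsLatticePt v) :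
    ∃ z : ℤ, dpair u v = z := by
  obtain ⟨a, rfl⟩ := isLatticePt_iff_mem_range.1 hu
  obtain ⟨b, rfl⟩ := isLatticePt_iff_mem_range.1 hv
  exact ⟨a ⬝ᵥ b, by simp [dpair, dotProduct]⟩

theorem ncard_intPoints_image (e : (Fin n → ℚ) ≃ (Fin n → ℚ))
    (he : ∀ x, IsLatticePt (e x) ↔ IsLatticePt x) (A : Set (Fin n → ℚ)) :
    {u : Fin n → ℤ | (fun i => (u i : ℚ)) ∈ e '' A}.ncard =
      {u : Fin n → ℤ | (fun i => (u i : ℚ)) ∈ A}.ncard := by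
  set ι : (Fin n → ℤ) → Fin n → ℚ := fun u i => u i
  have hι : Function.Injective ι := Int.cast_injective.comp_left
  have hcard (B : Set (Fin n → ℚ)) : {u | ι u ∈ B}.ncard = (B ∩ range ι).ncard := by
    rw [← ncard_preimage_of_injective_subset_range hι inter_subset_right, preimage_inter_range]
    rfl
  have hL : e ⁻¹' range ι = range ι := by
    ext x
    simpa only [mem_preimage, ι, ← isLatticePt_iff_mem_range] using he x
  rw [hcard, hcard, ← image_inter_preimage, hL, ncard_image_of_injective _ e.injective]

end Pairing

section Dual
variable {n : ℕ}

theorem dualP_convexHull (A : Set (Fin n → ℚ)) : dualP (convexHull ℚ A) = dualP A := by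
  refine Subset.antisymm (fun u hu v hv => hu v (subset_convexHull ℚ A hv)) fun u hu => ?_
  exact convexHull_min hu (convex_halfSpace_ge (isLinearMap_dpair u) (-1))

theorem wSlice_subset {P : Set (Fin n → ℚ)} (hP : Convex ℚ P) (w : Fin n → ℤ) (h : ℤ) :
    wSlice w h P ⊆ P :=
  convexHull_min (fun _ hx => hx.1) hP

theorem pairing_eq_of_mem_wSlice {w : Fin n → ℤ} {h : ℤ} {P : Set (Fin n → ℚ)} {x : Fin n → ℚ}
    (hx : x ∈ wSlice w h P) : pairing w x = h :=
  convexHull_min (fun _ hy => hy.2.2)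
    (convex_hyperplane (isLinearMap_dpair fun i => (w i : ℚ)) _) hx

theorem mem_dualP_mutation_iff {w : Fin n → ℤ} {P F : Set (Fin n → ℚ)} {G : ℤ → Set (Fin n → ℚ)}
    {u : Fin n → ℚ} : u ∈ dualP (mutation w P F G) ↔
      (∀ h : ℤ, h < 0 → ∀ g ∈ G h, -1 ≤ dpair u g) ∧
      ∀ h : ℤ, 0 ≤ h → ∀ x ∈ wSlice w h P, ∀ f ∈ F, -1 ≤ dpair u (x + (h : ℚ) • f) := by
  rw [mutation, dualP_convexHull]
  simp only [dualP, mem_ofPred_eq, mem_union, mem_iUnion, exists_prop, mem_add, mem_smul_set,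
    exists_exists_and_eq_and, or_imp, forall_exists_index, and_imp, forall_and]
  exact and_congr ⟨fun H h hh g hg => H g h hh hg, fun H g h hh hg => H h hh g hg⟩
    ⟨fun H h hh x hx f hf => H _ h hh x hx f hf rfl,
      fun H _ h hh x hx f hf hv => hv ▸ H h hh x hx f hf⟩

end Dual

section MinPairing
variable {n : ℕ} (S : Finset (Fin n → ℚ)) (hS : S.Nonempty)

def minPairing (u : Fin n → ℚ) : ℚ := S.inf' hS (dpair u)

theorem isLeast_minPairing (u : Fin n → ℚ) :
    IsLeast (dpair u '' convexHull ℚ (S : Set (Fin n → ℚ))) (minPairing S hS u) := by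
  obtain ⟨s, hs, hmin⟩ := Finset.exists_mem_eq_inf' hS (dpair u)
  refine ⟨⟨s, subset_convexHull ℚ _ hs, hmin.symm⟩, ?_⟩
  rintro _ ⟨f, hf, rfl⟩
  exact convexHull_min (fun t ht => Finset.inf'_le (dpair u) ht)
    (convex_halfSpace_ge (isLinearMap_dpair u) _) hf

theorem minPairing_add_smul {c : Fin n → ℚ} (hc : ∀ s ∈ S, dpair c s = 0) (u : Fin n → ℚ)
    (t : ℚ) : minPairing S hS (u + t • c) = minPairing S hS u :=
  Finset.inf'_congr hS rfl fun s hs => by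
    rw [dpair_add_left, dpair_smul_left, hc s hs, mul_zero, add_zero]

theorem minPairing_smul {t : ℚ} (ht : 0 ≤ t) (u : Fin n → ℚ) :
    minPairing S hS (t • u) = t * minPairing S hS u := by
  rw [minPairing, minPairing, Finset.apply_inf'_eq_inf'_comp hS (t * ·)
    fun _ _ => mul_min_of_nonneg _ _ ht]
  exact Finset.inf'_congr hS rfl fun s _ => dpair_smul_left t u s

theorem continuous_minPairing : Continuous (minPairing S hS) :=
  Continuous.finset_inf'_apply hS fun _ _ =>
    continuous_finsetSum _ fun i _ => (continuous_apply i).mul continuous_const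

theorem IsLatticePt.minPairing_eq_intCast (hSlat : ∀ s ∈ S, IsLatticePt s) {u : Fin n → ℚ}
    (hu : IsLatticePt u) : ∃ z : ℤ, minPairing S hS u = z := by
  obtain ⟨s, hs, hmin⟩ := Finset.exists_mem_eq_inf' hS (dpair u)
  rw [minPairing, hmin]
  exact hu.dpair_eq_intCast (hSlat s hs)

theorem isLatticePt_sub_minPairing_smul_iff (hSlat : ∀ s ∈ S, IsLatticePt s) {c : Fin n → ℚ}
    (hc : IsLatticePt c) (hcS : ∀ s ∈ S, dpair c s = 0) {u : Fin n → ℚ} :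
    IsLatticePt (u - minPairing S hS u • c) ↔ IsLatticePt u := by
  have hshift : minPairing S hS (u - minPairing S hS u • c) = minPairing S hS u := by
    rw [sub_eq_add_neg, ← neg_smul, minPairing_add_smul S hS hcS]
  refine ⟨fun hTu => ?_, fun hu => ?_⟩
  · obtain ⟨z, hz⟩ := hTu.minPairing_eq_intCast S hS hSlat
    simpa [hshift ▸ hz] using hTu.add_intCast_smul hc z
  · obtain ⟨z, hz⟩ := hu.minPairing_eq_intCast S hS hSlat
    simpa [hz, sub_eq_add_neg] using hu.add_intCast_smul hc (-z)

end MinPairing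

section Shear
variable {𝕜 E : Type*} [Ring 𝕜] [TopologicalSpace 𝕜] [AddCommGroup E] [Module 𝕜 E]
  [TopologicalSpace E] [IsTopologicalAddGroup E] [ContinuousSMul 𝕜 E]

def shearHomeomorph (φ : E → 𝕜) (hφ : Continuous φ) (c : E)
    (hφc : ∀ u (t : 𝕜), φ (u + t • c) = φ u) : E ≃ₜ E where
  toFun u := u - φ u • c
  invFun u := u + φ u • c
  left_inv u := by
    dsimp only
    rw [sub_eq_add_neg, ← neg_smul, hφc, neg_smul, neg_add_cancel_right]
  right_inv u := by
    dsimp only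
    simp only [hφc, add_sub_cancel_right]
  continuous_toFun := continuous_id.sub (hφ.smul continuous_const)
  continuous_invFun := continuous_id.add (hφ.smul continuous_const)

theorem shearHomeomorph_apply (φ : E → 𝕜) (hφ : Continuous φ) (c : E)
    (hφc : ∀ u (t : 𝕜), φ (u + t • c) = φ u) (u : E) :
    shearHomeomorph φ hφ c hφc u = u - φ u • c :=
  rfl

end Shear

section Mutation
variable {n : ℕ} {w : Fin n → ℤ} {P F : Set (Fin n → ℚ)} {G : ℤ → Set (Fin n → ℚ)}

theorem sub_smul_mem_dualP_mutation (hP : Convex ℚ P) (hFw : ∀ f ∈ F, pairing w f = 0)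
    (hGP : ∀ h : ℤ, h < 0 → G h + (-(h : ℚ)) • F ⊆ wSlice w h P) {u : Fin n → ℚ} {m : ℚ}
    (hm : IsLeast (dpair u '' F) m) (hu : u ∈ dualP P) :
    u - m • (fun i => (w i : ℚ)) ∈ dualP (mutation w P F G) := by
  obtain ⟨⟨f₀, hf₀, hf₀m⟩, hmle⟩ := hm
  refine mem_dualP_mutation_iff.2 ⟨fun h hh g hg => ?_, fun h hh x hx f hf => ?_⟩
  · have hgf : g + (-(h : ℚ)) • f₀ ∈ wSlice w h P :=
      hGP h hh (add_mem_add hg (smul_mem_smul_set hf₀))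
    have hpg : pairing w g = h := by
      simpa only [pairing_add, pairing_smul, hFw f₀ hf₀, mul_zero, add_zero] using
        pairing_eq_of_mem_wSlice hgf
    calc -1 ≤ dpair u (g + (-(h : ℚ)) • f₀) := hu _ (wSlice_subset hP w h hgf)
      _ = dpair (u - m • fun i => (w i : ℚ)) g := by
        rw [dpair_sub_left, dpair_smul_left, dpair_intCast_left, hpg, dpair_add_right,
          dpair_smul_right, hf₀m]
        ring
  · have hmf : m ≤ dpair u f := hmle ⟨f, hf, rfl⟩
    have hh' : (0 : ℚ) ≤ h := by exact_mod_cast hh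
    calc -1 ≤ dpair u x := hu x (wSlice_subset hP w h hx)
      _ ≤ dpair u x + h * (dpair u f - m) :=
        le_add_of_nonneg_right (mul_nonneg hh' (sub_nonneg.2 hmf))
      _ = dpair (u - m • fun i => (w i : ℚ)) (x + (h : ℚ) • f) := by
        rw [dpair_sub_left, dpair_smul_left, dpair_intCast_left, pairing_add, pairing_smul,
          pairing_eq_of_mem_wSlice hx, hFw f hf, dpair_add_right, dpair_smul_right]
        ring

theorem add_smul_mem_dualP {SP : Finset (Fin n → ℚ)} (hP : P = convexHull ℚ (SP : Set _))
    (hSP : ∀ x ∈ SP, IsLatticePt x) (hFw : ∀ f ∈ F, pairing w f = 0)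
    (hPG : ∀ h : ℤ, h < 0 → {v | v ∈ P.extremePoints ℚ ∧ pairing w v = h} ⊆ G h + (-(h : ℚ)) • F)
    {u : Fin n → ℚ} {m : ℚ} (hm : IsLeast (dpair u '' F) m)
    (hu : u ∈ dualP (mutation w P F G)) :
    u + m • (fun i => (w i : ℚ)) ∈ dualP P := by
  obtain ⟨⟨f₀, hf₀, hf₀m⟩, hmle⟩ := hm
  obtain ⟨huG, huS⟩ := mem_dualP_mutation_iff.1 hu
  subst hP
  -- a linear functional is bounded below on a polytope as soon as it is on its vertices
  rw [← SP.convexHull_extremePoints_convexHull, dualP_convexHull]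
  intro v hv
  have hvlat : IsLatticePt v := hSP v (extremePoints_convexHull_subset hv)
  obtain ⟨h, hh⟩ := IsLatticePt.dpair_eq_intCast (fun i => ⟨w i, rfl⟩) hvlat
  rw [dpair_intCast_left] at hh
  rcases le_or_gt 0 h with h0 | h0
  · have hvS : v ∈ wSlice w h (convexHull ℚ SP) :=
      subset_convexHull ℚ _ ⟨extremePoints_subset hv, hvlat, hh⟩
    calc -1 ≤ dpair u (v + (h : ℚ) • f₀) := huS h h0 v hvS f₀ hf₀
      _ = dpair (u + m • fun i => (w i : ℚ)) v := by
        rw [dpair_add_left, dpair_smul_left, dpair_intCast_left, hh, dpair_add_right,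
          dpair_smul_right, hf₀m]
        ring
  · obtain ⟨g, hg, _, ⟨f, hf, rfl⟩, rfl⟩ := hPG h h0 ⟨hv, hh⟩
    have hpg : pairing w g = h := by
      simpa only [pairing_add, pairing_smul, hFw f hf, mul_zero, add_zero] using hh
    have hmf : m ≤ dpair u f := hmle ⟨f, hf, rfl⟩
    have hh' : (0 : ℚ) ≤ -h := neg_nonneg.2 (by exact_mod_cast h0.le)
    calc -1 ≤ dpair u g := huG h h0 g hg
      _ ≤ dpair u g + -h * (dpair u f - m) :=
        le_add_of_nonneg_right (mul_nonneg hh' (sub_nonneg.2 hmf))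
      _ = dpair (u + m • fun i => (w i : ℚ)) (g + (-(h : ℚ)) • f) := by
        rw [dpair_add_left, dpair_smul_left, dpair_intCast_left, pairing_add, pairing_smul, hpg,
          hFw f hf, dpair_add_right, dpair_smul_right]
        ring

theorem dualP_mutation_eq_image {SP SF : Finset (Fin n → ℚ)} (hP : P = convexHull ℚ (SP : Set _))
    (hSP : ∀ x ∈ SP, IsLatticePt x) (hF : F = convexHull ℚ (SF : Set _)) (hSF : SF.Nonempty)
    (hFw : ∀ f ∈ F, pairing w f = 0)
    (hG : ∀ h : ℤ, h < 0 →
      {v | v ∈ P.extremePoints ℚ ∧ pairing w v = h} ⊆ G h + (-(h : ℚ)) • F ∧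
      G h + (-(h : ℚ)) • F ⊆ wSlice w h P) :
    dualP (mutation w P F G) =
      (fun u => u - minPairing SF hSF u • fun i => (w i : ℚ)) '' dualP P := by
  have hm (u : Fin n → ℚ) : IsLeast (dpair u '' F) (minPairing SF hSF u) :=
    hF ▸ isLeast_minPairing SF hSF u
  have hSFw : ∀ s ∈ SF, dpair (fun i => (w i : ℚ)) s = 0 :=
    fun s hs => hFw s (hF ▸ subset_convexHull ℚ _ hs)
  refine Subset.antisymm (fun u hu => ⟨_, add_smul_mem_dualP hP hSP hFw
    (fun h hh => (hG h hh).1) (hm u) hu, ?_⟩) ?_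
  · simp only [minPairing_add_smul SF hSF hSFw, add_sub_cancel_right]
  · rintro _ ⟨u, hu, rfl⟩
    exact sub_smul_mem_dualP_mutation (hP ▸ convex_convexHull ℚ _) hFw (fun h hh => (hG h hh).2)
      (hm u) hu

end Mutation

theorem mutation_preserves_dual_boundary_points_general {n : ℕ} (w : Fin n → ℤ)
    (P F : Set (Fin n → ℚ)) (G : ℤ → Set (Fin n → ℚ)) (hP : IsLatticePolytope P)
    (hdata : IsMutData w P F G) :
    ∀ k : ℕ, 0 < k →
      Set.ncard {u : Fin n → ℤ | (fun i => (u i : ℚ)) ∈ frontier ((k : ℚ) • dualP P)} =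
      Set.ncard {u : Fin n → ℤ |
        (fun i => (u i : ℚ)) ∈ frontier ((k : ℚ) • dualP (mutation w P F G))} := by
  intro k _
  obtain ⟨SP, hSP, hP⟩ := hP
  obtain ⟨⟨SF, hSFlat, hF⟩, hFne, hFw, hG⟩ := hdata
  have hSF : SF.Nonempty := by
    rw [hF] at hFne
    exact Finset.coe_nonempty.1 (convexHull_nonempty_iff.1 hFne)
  have hSFw : ∀ s ∈ SF, dpair (fun i => (w i : ℚ)) s = 0 :=
    fun s hs => hFw s (hF ▸ subset_convexHull ℚ _ hs)
  set T := shearHomeomorph (minPairing SF hSF) (continuous_minPairing SF hSF)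
    (fun i => (w i : ℚ)) (minPairing_add_smul SF hSF hSFw)
  have hThom (u : Fin n → ℚ) : T ((k : ℚ) • u) = (k : ℚ) • T u := by
    simp only [T, shearHomeomorph_apply, minPairing_smul SF hSF k.cast_nonneg, smul_sub, mul_smul]
  have hfront : frontier ((k : ℚ) • dualP (mutation w P F G)) =
      T '' frontier ((k : ℚ) • dualP P) := by
    rw [T.image_frontier, image_smul_comm _ _ _ hThom,
      dualP_mutation_eq_image hP hSP hF hSF hFw fun h hh => (hG h hh).2]
    rfl
  rw [hfront]
  exact (ncard_intPoints_image T.toEquiv (fun _ =>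
    isLatticePt_sub_minPairing_smul_iff SF hSF hSFlat (fun i => ⟨w i, rfl⟩) hSFw) _).symm

/-- Combinatorial mutations preserve the number of boundary lattice points of every dilate
of the dual polytope: `|∂(kP*) ∩ M| = |∂(kQ*) ∩ M|` for all `k ≥ 1`, where `Q = mut_w(P,F)`. -/
theorem mutation_preserves_dual_boundary_points {n : ℕ} (w : Fin n → ℤ)
    (P F : Set (Fin n → ℚ)) (G : ℤ → Set (Fin n → ℚ)) (hP : IsLatticePolytope P)
    (h0 : (0 : Fin n → ℚ) ∈ interior P) (hw : IsPrimitive w)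
    (hdata : IsMutData w P F G) :
    ∀ k : ℕ, 0 < k →
      Set.ncard {u : Fin n → ℤ | (fun i => (u i : ℚ)) ∈ frontier ((k : ℚ) • dualP P)} =
      Set.ncard {u : Fin n → ℤ |
        (fun i => (u i : ℚ)) ∈ frontier ((k : ℚ) • dualP (mutation w P F G))} :=
  mutation_preserves_dual_boundary_points_general w P F G hP hdata
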